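/- There exists a constant c > 0, depending only on n, Q and B, such that for every pair (x,u) ∈ G and every t with 0 < t ≤ 1: c·(1 + |x|)^{-2} ≤ t²·|x|² + |u − D_t x|². -/

import Mathlib

open MeasureTheory Matrix Real
open scoped ENNReal RealInnerProductSpace

noncomputable section

/-- Euclidean space `ℝⁿ`. -/
abbrev Vec (n : ℕ) := EuclideanSpace ℝ (Fin n)

/-- The matrix exponential `e^A`. -/
noncomputable def mExp {n : ℕ} (A : Matrix (Fin n) (Fin n) ℝ) : Matrix (Fin n) (Fin n) ℝ :=
  NormedSpace.exp A

/-- All complex eigenvalues of `B` have negative real part. -/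
def SpecNeg {n : ℕ} (B : Matrix (Fin n) (Fin n) ℝ) : Prop :=
  ∀ μ ∈ spectrum ℂ (B.map (Complex.ofReal : ℝ → ℂ)), μ.re < 0

/-- `Q_t = ∫₀ᵗ e^{sB} Q e^{sB*} ds`, defined entrywise. -/
noncomputable def Qt {n : ℕ} (Q B : Matrix (Fin n) (Fin n) ℝ) (t : ℝ) :
    Matrix (Fin n) (Fin n) ℝ :=
  Matrix.of fun i j => ∫ s in (0:ℝ)..t, (mExp (s • B) * Q * (mExp (s • B))ᵀ) i j

/-- `Q_∞ = ∫₀^∞ e^{sB} Q e^{sB*} ds`, defined entrywise. -/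
noncomputable def Qinf {n : ℕ} (Q B : Matrix (Fin n) (Fin n) ℝ) : Matrix (Fin n) (Fin n) ℝ :=
  Matrix.of fun i j => ∫ s in Set.Ioi (0:ℝ), (mExp (s • B) * Q * (mExp (s • B))ᵀ) i j

/-- Application of a matrix to a vector in Euclidean space. -/
noncomputable def app {n : ℕ} (A : Matrix (Fin n) (Fin n) ℝ) (x : Vec n) : Vec n :=
  Matrix.toEuclideanLin A x

/-- The Gaussian measure with covariance matrix `M`. -/
noncomputable def gaussianOf {n : ℕ} (M : Matrix (Fin n) (Fin n) ℝ) : Measure (Vec n) :=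
  volume.withDensity fun y =>
    ENNReal.ofReal ((2 * π) ^ (-(n : ℝ) / 2) * M.det ^ (-(1 : ℝ) / 2) *
      Real.exp (-(1 / 2) * ⟪app M⁻¹ y, y⟫))

/-- The Ornstein--Uhlenbeck semigroup `H_t`. -/
noncomputable def OU {n : ℕ} (Q B : Matrix (Fin n) (Fin n) ℝ) (t : ℝ) (f : Vec n → ℝ)
    (x : Vec n) : ℝ :=
  ∫ y, f (app (mExp (t • B)) x - y) ∂(gaussianOf (Qt Q B t))

/-- `D_t = Q_∞ e^{-tB*} Q_∞^{-1}`. -/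
noncomputable def Dm {n : ℕ} (Q B : Matrix (Fin n) (Fin n) ℝ) (t : ℝ) :
    Matrix (Fin n) (Fin n) ℝ :=
  Qinf Q B * mExp ((-t) • Bᵀ) * (Qinf Q B)⁻¹

/-- The quadratic form `R(x) = ½⟨Q_∞^{-1}x, x⟩`. -/
noncomputable def Rq {n : ℕ} (Q B : Matrix (Fin n) (Fin n) ℝ) (x : Vec n) : ℝ :=
  (1 / 2) * ⟪app (Qinf Q B)⁻¹ x, x⟫

/-- The Mehler kernel `K_t(x,u)`. -/
noncomputable def Mehler {n : ℕ} (Q B : Matrix (Fin n) (Fin n) ℝ) (t : ℝ) (x u : Vec n) : ℝ :=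
  Real.sqrt ((Qinf Q B).det / (Qt Q B t).det) * Real.exp (Rq Q B x) *
    Real.exp (-(1 / 2) *
      ⟪app ((Qt Q B t)⁻¹ - (Qinf Q B)⁻¹) (u - app (Dm Q B t) x), u - app (Dm Q B t) x⟫)

/-- Operator norm of a matrix acting on Euclidean space. -/
noncomputable def opN {n : ℕ} (A : Matrix (Fin n) (Fin n) ℝ) : ℝ :=
  ‖Matrix.toEuclideanCLM (𝕜 := ℝ) A‖

/-!
Since `D_0 = 1` and `t ↦ D_t` is smooth, `|x - D_t x| ≤ K t |x|` for `t ∈ [0, 1]`. Put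
`ε = 1/(1+|x|) < |x - u|`. Either `t|x| ≥ ε/(2K)`, or `|u - D_t x| ≥ |x - u| - K t |x| ≥ ε/2`; in
both cases `ε² ≲ t²|x|² + |u - D_t x|²`.

The only non-elementary input is `D_0 = Q_∞ Q_∞⁻¹ = 1`, i.e. that `Q_∞` is invertible (for a
singular `Q_∞`, `Q_∞⁻¹ = 0`). It is positive definite: the integrand `e^{sB} Q e^{sB*}` is, and it
is integrable because `‖e^{sB}‖` decays exponentially. The decay comes from Gelfand's formula, as
the spectrum of `e^B` lies in `exp (spectrum B)`, inside the open unit disc.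
-/

open NormedSpace

section BanachAlgebra

variable {A : Type*} [NormedRing A] [NormedAlgebra ℂ A] [CompleteSpace A]

theorem exists_norm_pow_lt_one_of_spectralRadius_lt_one {a : A}
    (ha : spectralRadius ℂ a < 1) : ∃ N : ℕ, 0 < N ∧ ‖a ^ N‖ < 1 := by
  obtain ⟨N, hN, hpos⟩ := ((spectrum.pow_norm_pow_one_div_tendsto_nhds_spectralRadius a
    |>.eventually_lt_const ha).and (Filter.eventually_gt_atTop 0)).exists
  refine ⟨N, hpos, ?_⟩
  rw [ENNReal.ofReal_lt_one] at hN
  exact (Real.rpow_lt_one_iff' (norm_nonneg _) (by positivity)).mp hN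

theorem exists_norm_exp_smul_le_of_spectralRadius_lt_one [NormOneClass A] {a : A}
    (ha : spectralRadius ℂ (exp a) < 1) :
    ∃ C δ : ℝ, 0 < δ ∧
      ∀ s : ℝ, 0 ≤ s → ‖exp ((s : ℂ) • a)‖ ≤ C * Real.exp (-δ * s) := by
  let +nondep : NormedAlgebra ℚ A := .restrictScalars ℚ ℂ A
  obtain ⟨N, hN, hpow⟩ := exists_norm_pow_lt_one_of_spectralRadius_lt_one ha
  set q := max ‖exp a ^ N‖ (1 / 2)
  have hq0 : 0 < q := lt_max_of_lt_right one_half_pos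
  have hlog : Real.log q < 0 := Real.log_neg hq0 (max_lt hpow one_half_lt_one)
  have hN' : (0 : ℝ) < N := Nat.cast_pos.mpr hN
  have hcont : Continuous fun r : ℝ => exp ((r : ℂ) • a) := by fun_prop
  obtain ⟨M, hM⟩ := (isCompact_Icc (a := (0 : ℝ)) (b := N)).exists_bound_of_continuousOn
    hcont.continuousOn
  have hM0 : 0 ≤ M := (norm_nonneg _).trans (hM 0 ⟨le_rfl, hN'.le⟩)
  refine ⟨M / q, -Real.log q / N, div_pos (neg_pos.mpr hlog) hN', fun s hs => ?_⟩
  set m := ⌊s / N⌋₊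
  have hm : s / N - 1 ≤ m := by linarith [Nat.lt_floor_add_one (s / N)]
  have hr : s - N * m ∈ Set.Icc (0 : ℝ) N := by
    constructor
    · nlinarith [Nat.floor_le (div_nonneg hs hN'.le), mul_div_cancel₀ s hN'.ne']
    · nlinarith [mul_div_cancel₀ s hN'.ne']
  have hsplit :
      exp ((s : ℂ) • a) = exp (((s - N * m : ℝ) : ℂ) • a) * (exp a ^ N) ^ m := by
    rw [← pow_mul, ← NormedSpace.exp_nsmul, ← Nat.cast_smul_eq_nsmul ℂ,
      ← NormedSpace.exp_add_of_commute (((Commute.refl a).smul_left _).smul_right _),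
      ← add_smul]
    push_cast
    ring_nf
  have hqm : q ^ m ≤ Real.exp (-(-Real.log q / N) * s) / q := by
    rw [← Real.exp_log hq0, ← Real.exp_nat_mul, ← Real.exp_sub, Real.exp_le_exp, Real.log_exp]
    have : (s / N - 1) * Real.log q = -(-Real.log q / N) * s - Real.log q := by ring
    nlinarith [mul_le_mul_of_nonpos_right hm hlog.le]
  calc ‖exp ((s : ℂ) • a)‖
      ≤ ‖exp (((s - N * m : ℝ) : ℂ) • a)‖ * ‖exp a ^ N‖ ^ m := by
        rw [hsplit]
        exact (norm_mul_le _ _).trans (by gcongr; exact norm_pow_le _ _)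
    _ ≤ M * q ^ m := by gcongr; exacts [hM _ hr, le_max_left _ _]
    _ ≤ M / q * Real.exp (-(-Real.log q / N) * s) := by
        rw [div_mul_eq_mul_div, mul_div_assoc]; gcongr

end BanachAlgebra

section MatrixExp

open scoped Matrix.Norms.L2Operator

theorem Matrix.norm_entry_le_l2_opNorm {m n 𝕜 : Type*} [Fintype m] [Fintype n] [DecidableEq n]
    [RCLike 𝕜] (A : Matrix m n 𝕜) (i : m) (j : n) : ‖A i j‖ ≤ ‖A‖ :=
  calc ‖A i j‖
      = ‖(EuclideanSpace.equiv m 𝕜).symm (A *ᵥ EuclideanSpace.single j 1) i‖ := by simp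
    _ ≤ ‖(EuclideanSpace.equiv m 𝕜).symm (A *ᵥ EuclideanSpace.single j 1)‖ :=
        PiLp.norm_apply_le _ _
    _ ≤ ‖A‖ * ‖EuclideanSpace.single j (1 : 𝕜)‖ := l2_opNorm_mulVec _ _
    _ = ‖A‖ := by simp

variable {m : Type*} [Fintype m] [DecidableEq m]

theorem Matrix.exp_mulVec_of_mulVec_eq_smul {𝕜 : Type*} [RCLike 𝕜] {A : Matrix m m 𝕜}
    {μ : 𝕜} {v : m → 𝕜} (hv : A *ᵥ v = μ • v) : exp A *ᵥ v = exp μ • v := by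
  have hpow : ∀ k : ℕ, A ^ k *ᵥ v = μ ^ k • v := by
    intro k
    induction k with
    | zero => simp
    | succ k ih => rw [pow_succ', ← mulVec_mulVec, ih, mulVec_smul, hv, smul_smul, pow_succ]
  have hA := (exp_series_hasSum_exp' (𝕂 := 𝕜) A).map (mulVec.addMonoidHomLeft v)
    (continuous_id.matrix_mulVec continuous_const)
  have hμ := (exp_series_hasSum_exp' (𝕂 := 𝕜) μ).smul_const v
  simp only [Function.comp_def, mulVec.addMonoidHomLeft, AddMonoidHom.coe_mk, ZeroHom.coe_mk,
    smul_mulVec, hpow, smul_smul] at hA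
  exact hA.unique hμ

theorem Matrix.spectrum_exp_subset (A : Matrix m m ℂ) :
    spectrum ℂ (exp A) ⊆ Complex.exp '' spectrum ℂ A := by
  intro μ hμ
  rw [← spectrum_toLin', ← Module.End.hasEigenvalue_iff_mem_spectrum] at hμ
  have hmaps : Set.MapsTo (toLin' A) (Module.End.eigenspace (toLin' (exp A)) μ)
      (Module.End.eigenspace (toLin' (exp A)) μ) :=
    Module.End.mapsTo_genEigenspace_of_comm
      (((Commute.refl A).exp_left).map (toLinAlgEquiv' (R := ℂ) (n := m))) μ 1
  have : Nontrivial (Module.End.eigenspace (toLin' (exp A)) μ) :=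
    Submodule.nontrivial_iff_ne_bot.mpr hμ
  obtain ⟨lam, hlam⟩ := Module.End.exists_eigenvalue ((toLin' A).restrict hmaps)
  obtain ⟨⟨w, hwμ⟩, hw⟩ := hlam.exists_hasEigenvector
  have hAw : A *ᵥ w = lam • w := congrArg Subtype.val hw.apply_eq_smul
  have hw0 : w ≠ 0 := fun h => hw.2 (Subtype.ext h)
  refine ⟨lam, ?_, ?_⟩
  · rw [← spectrum_toLin', ← Module.End.hasEigenvalue_iff_mem_spectrum]
    exact Module.End.hasEigenvalue_of_hasEigenvector
      ⟨Module.End.mem_eigenspace_iff.mpr hAw, hw0⟩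
  · have hexp := Matrix.exp_mulVec_of_mulVec_eq_smul hAw
    rw [Module.End.mem_eigenspace_iff, toLin'_apply, hexp] at hwμ
    rw [Complex.exp_eq_exp_ℂ]
    exact smul_left_injective ℂ hw0 hwμ

theorem Matrix.spectralRadius_exp_lt_one [Nonempty m] {A : Matrix m m ℂ}
    (hA : ∀ z ∈ spectrum ℂ A, z.re < 0) : spectralRadius ℂ (exp A) < 1 := by
  have := spectrum.spectralRadius_lt_of_forall_lt (exp A) (r := 1) ?_
  · simpa using this
  · intro _ hμ
    obtain ⟨z, hz, rfl⟩ := spectrum_exp_subset A hμ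
    rw [← NNReal.coe_lt_coe, coe_nnnorm, Complex.norm_exp]
    simpa using hA z hz

end MatrixExp

theorem Matrix.posDef_of_integral {α ι : Type*} [MeasurableSpace α] [Fintype ι]
    {μ : Measure α} [NeZero μ] {F : α → Matrix ι ι ℝ} (hF : ∀ a, (F a).PosDef)
    (hint : ∀ i j, Integrable (fun a => F a i j) μ) :
    (Matrix.of fun i j => ∫ a, F a i j ∂μ).PosDef := by
  refine .of_dotProduct_mulVec_pos ?_ fun x hx => ?_
  · ext i j
    simp only [conjTranspose_apply, of_apply, star_trivial]
    exact integral_congr_ae (.of_forall fun a => (hF a).1.apply i j)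
  have hrow : ∀ i, Integrable (fun a => ∑ j, x i * (F a i j * x j)) μ := fun i =>
    integrable_finsetSum _ fun j _ => ((hint i j).mul_const _).const_mul _
  have hquad : star x ⬝ᵥ (Matrix.of fun i j => ∫ a, F a i j ∂μ) *ᵥ x =
      ∫ a, star x ⬝ᵥ F a *ᵥ x ∂μ := by
    simp only [dotProduct, mulVec, of_apply, Finset.mul_sum, star_trivial]
    rw [integral_finsetSum _ fun i _ => hrow i]
    refine Finset.sum_congr rfl fun i _ => ?_
    rw [integral_finsetSum _ fun j _ => ((hint i j).mul_const _).const_mul _]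
    simp only [integral_const_mul, integral_mul_const]
  have hpos : ∀ a, 0 < star x ⬝ᵥ F a *ᵥ x := fun a => (hF a).dotProduct_mulVec_pos hx
  have hint_quad : Integrable (fun a => star x ⬝ᵥ F a *ᵥ x) μ := by
    simp only [dotProduct, mulVec, Finset.mul_sum, star_trivial]
    exact integrable_finsetSum _ fun i _ => hrow i
  rw [hquad, integral_pos_iff_support_of_nonneg (fun a => (hpos a).le) hint_quad,
    Set.eq_univ_of_forall fun a => Function.mem_support.mpr (hpos a).ne']
  exact Measure.measure_univ_pos.mpr (NeZero.ne μ)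

theorem sq_le_mul_sq_add_norm_sub_sq {E : Type*} [SeminormedAddCommGroup E] {x u y : E}
    {ε K r : ℝ} (hε : 0 ≤ ε) (hxu : ε ≤ ‖x - u‖) (hxy : ‖x - y‖ ≤ K * r) :
    ε ^ 2 ≤ 4 * (K ^ 2 + 1) * (r ^ 2 + ‖u - y‖ ^ 2) := by
  by_cases hnear : ε ≤ 2 * (K * r)
  · nlinarith [pow_le_pow_left₀ hε hnear 2, sq_nonneg r, sq_nonneg ‖u - y‖]
  · have htri : ‖x - u‖ ≤ ‖x - y‖ + ‖u - y‖ := by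
      simpa only [norm_sub_rev y u] using norm_sub_le_norm_sub_add_norm_sub x y u
    have hfar : ε ≤ 2 * ‖u - y‖ := by linarith
    nlinarith [pow_le_pow_left₀ hε hfar 2, sq_nonneg r, sq_nonneg ‖u - y‖]

section OrnsteinUhlenbeck

open scoped Matrix.Norms.L2Operator

variable {n : ℕ}

theorem exists_abs_mExp_smul_apply_le [Nonempty (Fin n)] {B : Matrix (Fin n) (Fin n) ℝ}
    (hB : SpecNeg B) : ∃ C δ : ℝ, 0 < δ ∧
      ∀ s : ℝ, 0 ≤ s → ∀ i j, |mExp (s • B) i j| ≤ C * Real.exp (-δ * s) := by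
  obtain ⟨C, δ, hδ, hdecay⟩ :=
    exists_norm_exp_smul_le_of_spectralRadius_lt_one (A := Matrix (Fin n) (Fin n) ℂ)
      (Matrix.spectralRadius_exp_lt_one hB)
  refine ⟨C, δ, hδ, fun s hs i j => ?_⟩
  have hmap : (mExp (s • B)).map Complex.ofReal = exp ((s : ℂ) • B.map Complex.ofReal) := by
    have := NormedSpace.map_exp_of_mem_ball (𝕂 := ℝ) Complex.ofRealHom.mapMatrix
      (continuous_id.matrix_map Complex.continuous_ofReal) (s • B)
      ((expSeries_radius_eq_top ℝ (Matrix (Fin n) (Fin n) ℝ)).symm ▸ edist_lt_top _ _)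
    rw [mExp]
    refine this.trans (congrArg _ ?_)
    ext
    simp
  calc |mExp (s • B) i j| = ‖(mExp (s • B)).map Complex.ofReal i j‖ := by simp
    _ ≤ ‖(mExp (s • B)).map Complex.ofReal‖ := Matrix.norm_entry_le_l2_opNorm _ _ _
    _ ≤ C * Real.exp (-δ * s) := hmap ▸ hdecay s hs

theorem integrableOn_mExp_smul_mul_mul_transpose_apply [Nonempty (Fin n)]
    (Q : Matrix (Fin n) (Fin n) ℝ) {B : Matrix (Fin n) (Fin n) ℝ} (hB : SpecNeg B)
    (i j : Fin n) :
    IntegrableOn (fun s => (mExp (s • B) * Q * (mExp (s • B))ᵀ) i j) (Set.Ioi (0 : ℝ)) := by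
  obtain ⟨C, δ, hδ, hE⟩ := exists_abs_mExp_smul_apply_le hB
  have hcont : Continuous fun s : ℝ => mExp (s • B) :=
    (differentiable_exp_smul_const ℝ B).continuous
  have hterm : ∀ k l, IntegrableOn
      (fun s => mExp (s • B) i k * Q k l * mExp (s • B) j l) (Set.Ioi (0 : ℝ)) := by
    intro k l
    refine Integrable.mono' ((exp_neg_integrableOn_Ioi 0 (mul_pos two_pos hδ)).const_mul
      (C ^ 2 * |Q k l|)) (by fun_prop) ?_
    filter_upwards [ae_restrict_mem measurableSet_Ioi] with s hs
    have hik := hE s (le_of_lt hs) i k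
    have hjl := hE s (le_of_lt hs) j l
    have hC : 0 ≤ C * Real.exp (-δ * s) := (abs_nonneg _).trans hik
    calc ‖mExp (s • B) i k * Q k l * mExp (s • B) j l‖
        = |mExp (s • B) i k| * |Q k l| * |mExp (s • B) j l| := by
          simp only [Real.norm_eq_abs, abs_mul]
      _ ≤ C * Real.exp (-δ * s) * |Q k l| * (C * Real.exp (-δ * s)) := by
          gcongr
      _ = C ^ 2 * |Q k l| * Real.exp (-(2 * δ) * s) := by
          rw [show -(2 * δ) * s = -δ * s + -δ * s by ring, Real.exp_add]; ring
  have hexpand : (fun s : ℝ => (mExp (s • B) * Q * (mExp (s • B))ᵀ) i j) =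
      fun s => ∑ l, ∑ k, mExp (s • B) i k * Q k l * mExp (s • B) j l := by
    ext s
    simp only [mul_apply, transpose_apply, Finset.sum_mul]
  rw [hexpand]
  exact integrable_finsetSum _ fun l _ => integrable_finsetSum _ fun k _ => hterm k l

theorem Qinf_posDef [Nonempty (Fin n)] {Q B : Matrix (Fin n) (Fin n) ℝ} (hQ : Q.PosDef)
    (hB : SpecNeg B) : (Qinf Q B).PosDef := by
  have : NeZero (volume.restrict (Set.Ioi (0 : ℝ))) := ⟨by simp⟩
  refine Matrix.posDef_of_integral (fun s => ?_)
    (integrableOn_mExp_smul_mul_mul_transpose_apply Q hB)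
  have hinj : Function.Injective (mExp (s • B)).vecMul :=
    vecMul_injective_iff_isUnit.mpr (Matrix.isUnit_exp _)
  simpa using hQ.mul_mul_conjTranspose_same hinj

theorem norm_sub_app_le (M : Matrix (Fin n) (Fin n) ℝ) (x : Vec n) :
    ‖x - app M x‖ ≤ ‖M - 1‖ * ‖x‖ := by
  have : x - app M x = app (1 - M) x := by simp [app]
  rw [this, norm_sub_rev]
  exact (toEuclideanCLM (𝕜 := ℝ) (1 - M)).le_opNorm x

theorem exists_norm_sub_app_Dm_le {Q B : Matrix (Fin n) (Fin n) ℝ}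
    (hQinf : IsUnit (Qinf Q B)) :
    ∃ K : ℝ, ∀ t ∈ Set.Icc (0 : ℝ) 1, ∀ x : Vec n,
      ‖x - app (Dm Q B t) x‖ ≤ K * (t * ‖x‖) := by
  have hexp : ContDiff ℝ 1 fun t : ℝ => mExp ((-t) • Bᵀ) :=
    (contDiff_iff_contDiffAt.mpr fun x => (exp_analytic (𝕂 := ℝ) x).contDiffAt).comp
      (contDiff_neg.smul contDiff_const)
  obtain ⟨K, hK⟩ := ((contDiff_const.mul hexp).mul contDiff_const).contDiffOn
    |>.exists_lipschitzOnWith one_ne_zero (convex_Icc (0 : ℝ) 1) isCompact_Icc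
  have hD0 : Dm Q B 0 = 1 := by
    simp [Dm, mExp, mul_nonsing_inv _ ((isUnit_iff_isUnit_det _).mp hQinf)]
  refine ⟨K, fun t ht x => ?_⟩
  have hD : ‖Dm Q B t - 1‖ ≤ K * t := by
    simpa [Dm, ← hD0, abs_of_nonneg ht.1] using hK.norm_sub_le ht ⟨le_rfl, zero_le_one⟩
  calc ‖x - app (Dm Q B t) x‖ ≤ ‖Dm Q B t - 1‖ * ‖x‖ := norm_sub_app_le _ x
    _ ≤ K * (t * ‖x‖) := by rw [← mul_assoc]; gcongr

end OrnsteinUhlenbeck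

/-- For `(x,u)` in the global region `G` and `0 < t ≤ 1`,
`c(1+|x|)^{-2} ≤ t²|x|² + |u − D_t x|²`. -/
theorem stmt17 (n : ℕ) (hn : 1 ≤ n) (Q B : Matrix (Fin n) (Fin n) ℝ)
    (hQ : Q.PosDef) (hB : SpecNeg B) :
    ∃ c : ℝ, 0 < c ∧
      ∀ x u : Vec n, 1 / (1 + ‖x‖) < ‖x - u‖ →
        ∀ t : ℝ, 0 < t → t ≤ 1 →
          c / (1 + ‖x‖) ^ 2 ≤ t ^ 2 * ‖x‖ ^ 2 + ‖u - app (Dm Q B t) x‖ ^ 2 := by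
  have : Nonempty (Fin n) := Fin.pos_iff_nonempty.mp hn
  obtain ⟨K, hK⟩ := exists_norm_sub_app_Dm_le (Qinf_posDef hQ hB).isUnit
  refine ⟨1 / (4 * (K ^ 2 + 1)), by positivity, fun x u hxu t ht ht1 => ?_⟩
  have hsq := sq_le_mul_sq_add_norm_sub_sq (by positivity) hxu.le (hK t ⟨ht.le, ht1⟩ x)
  calc 1 / (4 * (K ^ 2 + 1)) / (1 + ‖x‖) ^ 2 = (1 / (1 + ‖x‖)) ^ 2 / (4 * (K ^ 2 + 1)) := by
        rw [div_pow, one_pow, div_div, div_div, mul_comm]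
    _ ≤ (t * ‖x‖) ^ 2 + ‖u - app (Dm Q B t) x‖ ^ 2 := by
        rw [div_le_iff₀ (by positivity)]
        linarith
    _ = t ^ 2 * ‖x‖ ^ 2 + ‖u - app (Dm Q B t) x‖ ^ 2 := by ring
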